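/- For all φ, θ ∈ S(ℝ), the smooth function F(x, y) = W(φ, θ)(x/2, y/2) on ℝ² satisfies the intertwining identity (H̃_L F)(x, y) = W(H₀φ, θ)(x/2, y/2) for all (x, y) ∈ ℝ², where H̃_L = −(∂_x² + ∂_y²) + i(x∂_y − y∂_x) + (1/4)(x² + y²) is the Landau Hamiltonian and H₀ = −d²/dx² + x² is the harmonic oscillator Hamiltonian. -/

import Mathlib

open MeasureTheory Complex
open scoped ComplexConjugate Real

noncomputable section

/-- The cross-Wigner transform (one dimension):
`W(φ,ψ)(x,ξ) = (2π)⁻¹ ∫ e^{-iξt} φ(x+t/2) conj(ψ(x−t/2)) dt`. -/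
def crossWigner1 (φ ψ : ℝ → ℂ) (x ξ : ℝ) : ℂ :=
  ((2 * π)⁻¹ : ℝ) *
    ∫ t : ℝ, Complex.exp (-(Complex.I * ξ * t)) * φ (x + t / 2) * conj (ψ (x - t / 2))

/-- Partial derivative in the first variable. -/
def pdx (f : ℝ → ℝ → ℂ) (x y : ℝ) : ℂ := deriv (fun u => f u y) x

/-- Partial derivative in the second variable. -/
def pdy (f : ℝ → ℝ → ℂ) (x y : ℝ) : ℂ := deriv (fun v => f x v) y

/-- The Landau Hamiltonian
`H̃_L F = −(∂ₓ²F + ∂ᵧ²F) + i(x ∂ᵧF − y ∂ₓF) + (1/4)(x² + y²)F`. -/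
def landauOp (f : ℝ → ℝ → ℂ) (x y : ℝ) : ℂ :=
  -(pdx (pdx f) x y + pdy (pdy f) x y)
    + Complex.I * (x * pdy f x y - y * pdx f x y)
    + (((x ^ 2 + y ^ 2) / 4 : ℝ) : ℂ) * f x y

/-- The harmonic oscillator Hamiltonian `H₀φ = −φ'' + x²φ`. -/
def harmOsc (φ : ℝ → ℂ) (x : ℝ) : ℂ := -deriv (deriv φ) x + (x : ℂ) ^ 2 * φ x

/-!
With `Jⱼ(f, g)(x, y) = ∫ tʲ e^{-iyt/2} f((x+t)/2) conj (g((x-t)/2)) dt`, the function `F` is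
`(2π)⁻¹ J₀(φ, θ)` and `W(H₀φ, θ)(x/2, y/2)` is a combination of `J₀(φ'', θ)`, `J₀`, `J₁`, `J₂`.
Differentiating under the integral sign gives `∂ₓ Jⱼ(f, g) = (Jⱼ(f', g) + Jⱼ(f, g')) / 2` and
`∂ᵧ Jⱼ = -(i/2) Jⱼ₊₁`; integrating the `t`-derivative of the integrand of `J₀` over `ℝ` gives
`(iy/2) J₀(f, g) = (J₀(f', g) - J₀(f, g')) / 2`. Used for `(φ, θ)`, `(φ', θ)` and `(φ, θ')`, this
last identity removes the mixed and `y`-dependent terms of `H̃_L F`, leaving `W(H₀φ, θ)`.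
By Schwartz decay, all integrands are bounded by `K (1 + t²)⁻¹` locally uniformly in `x`.
-/

open SchwartzMap Metric

namespace SchwartzMap

variable {F : Type*} [NormedAddCommGroup F] [NormedSpace ℝ F]

theorem exists_one_add_abs_pow_mul_norm_half_sub_le (g : 𝓢(ℝ, F)) (k : ℕ) (R : ℝ) :
    ∃ C, ∀ x t : ℝ, |x| ≤ R → (1 + |t|) ^ k * ‖g (x / 2 - t / 2)‖ ≤ C := by
  refine ⟨(2 * (1 + R)) ^ k * (2 ^ k * (Finset.Iic (k, 0)).sup
    (fun m => SchwartzMap.seminorm ℝ m.1 m.2) g), fun x t hx => ?_⟩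
  set v := x / 2 - t / 2
  have hR : 0 ≤ R := (abs_nonneg x).trans hx
  have ht : 1 + |t| ≤ 2 * (1 + R) * (1 + |v|) := by
    have : |t| ≤ |x| + 2 * |v| := by
      calc |t| = |x - 2 * v| := by simp only [v]; ring_nf
        _ ≤ |x| + |2 * v| := abs_sub _ _
        _ = |x| + 2 * |v| := by rw [abs_mul, abs_two]
    nlinarith [abs_nonneg v]
  have hg := one_add_le_sup_seminorm_apply (𝕜 := ℝ) (m := (k, 0)) le_rfl le_rfl g v
  rw [norm_iteratedFDeriv_zero, Real.norm_eq_abs] at hg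
  calc (1 + |t|) ^ k * ‖g v‖ ≤ (2 * (1 + R) * (1 + |v|)) ^ k * ‖g v‖ := by gcongr
    _ = (2 * (1 + R)) ^ k * ((1 + |v|) ^ k * ‖g v‖) := by rw [mul_pow]; ring
    _ ≤ _ := by gcongr

theorem hasDerivAt_comp (g : 𝓢(ℝ, F)) {u : ℝ → ℝ} {u' s : ℝ} (hu : HasDerivAt u u' s) :
    HasDerivAt (fun s => g (u s)) (u' • derivCLM ℝ F g (u s)) s :=
  (g.hasDerivAt (u s)).scomp s hu

theorem hasDerivAt_conj_comp (g : 𝓢(ℝ, ℂ)) {u : ℝ → ℝ} {u' s : ℝ} (hu : HasDerivAt u u' s) :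
    HasDerivAt (fun s => conj (g (u s))) (u' • conj (derivCLM ℝ ℂ g (u s))) s := by
  simpa using (g.hasDerivAt_comp hu).star

end SchwartzMap

theorem hasDerivAt_integral_of_norm_le_inv_one_add_sq {E : Type*} [NormedAddCommGroup E]
    [NormedSpace ℝ E] {F F' : ℝ → ℝ → E} {x₀ K : ℝ} (hF : ∀ x, Continuous (F x))
    (hF' : Continuous (F' x₀)) (hF_int : Integrable (F x₀))
    (h_bound : ∀ x ∈ ball x₀ 1, ∀ t, ‖F' x t‖ ≤ K * (1 + t ^ 2)⁻¹)
    (h_diff : ∀ x ∈ ball x₀ 1, ∀ t, HasDerivAt (F · t) (F' x t) x) :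
    HasDerivAt (fun x => ∫ t, F x t) (∫ t, F' x₀ t) x₀ :=
  (hasDerivAt_integral_of_dominated_loc_of_deriv_le (ball_mem_nhds x₀ one_pos)
    (Filter.Eventually.of_forall fun x => (hF x).aestronglyMeasurable) hF_int
    hF'.aestronglyMeasurable (Filter.Eventually.of_forall fun t x hx => h_bound x hx t)
    (integrable_inv_one_add_sq.const_mul K)
    (Filter.Eventually.of_forall fun t x hx => h_diff x hx t)).2

theorem pdx_eq_of_hasDerivAt {F G : ℝ → ℝ → ℂ} (h : ∀ x y, HasDerivAt (F · y) (G x y) x) :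
    pdx F = G :=
  funext₂ fun x y => (h x y).deriv

theorem pdy_eq_of_hasDerivAt {F G : ℝ → ℝ → ℂ} (h : ∀ x y, HasDerivAt (F x ·) (G x y) y) :
    pdy F = G :=
  funext₂ fun x y => (h x y).deriv

local notation "∂" => derivCLM ℝ ℂ

namespace CrossWigner

variable (f g : 𝓢(ℝ, ℂ))

def integrand (x y t : ℝ) : ℂ :=
  cexp (-(I * ((y / 2 : ℝ) : ℂ) * t)) * f (x / 2 + t / 2) * conj (g (x / 2 - t / 2))

def moment (j : ℕ) (x y : ℝ) : ℂ := ∫ t : ℝ, (t : ℂ) ^ j * integrand f g x y t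

@[fun_prop]
theorem continuous_integrand (x y : ℝ) : Continuous (integrand f g x y) := by
  unfold integrand
  fun_prop

theorem norm_integrand (x y t : ℝ) :
    ‖integrand f g x y t‖ = ‖f (x / 2 + t / 2)‖ * ‖g (x / 2 - t / 2)‖ := by
  simp [integrand, norm_exp]

theorem exists_norm_pow_mul_integrand_le (j : ℕ) (R : ℝ) :
    ∃ K, ∀ x y t : ℝ, |x| ≤ R → ‖(t : ℂ) ^ j * integrand f g x y t‖ ≤ K * (1 + t ^ 2)⁻¹ := by
  obtain ⟨C, hC⟩ := g.exists_one_add_abs_pow_mul_norm_half_sub_le (j + 2) R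
  refine ⟨SchwartzMap.seminorm ℝ 0 0 f * C, fun x y t hx => ?_⟩
  have hf := norm_le_seminorm ℝ f (x / 2 + t / 2)
  have hsq : 1 + t ^ 2 ≤ (1 + |t|) ^ 2 := by nlinarith [abs_nonneg t, sq_abs t]
  rw [le_mul_inv_iff₀ (by positivity), norm_mul, norm_integrand, norm_pow, norm_real,
    Real.norm_eq_abs]
  calc |t| ^ j * (‖f (x / 2 + t / 2)‖ * ‖g (x / 2 - t / 2)‖) * (1 + t ^ 2)
      ≤ (1 + |t|) ^ j * (SchwartzMap.seminorm ℝ 0 0 f * ‖g (x / 2 - t / 2)‖) * (1 + |t|) ^ 2 := by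
        gcongr; linarith [abs_nonneg t]
    _ = SchwartzMap.seminorm ℝ 0 0 f * ((1 + |t|) ^ (j + 2) * ‖g (x / 2 - t / 2)‖) := by ring
    _ ≤ SchwartzMap.seminorm ℝ 0 0 f * C := by gcongr; exact hC x t hx

theorem integrable_pow_mul_integrand (j : ℕ) (x y : ℝ) :
    Integrable fun t : ℝ => (t : ℂ) ^ j * integrand f g x y t := by
  obtain ⟨K, hK⟩ := exists_norm_pow_mul_integrand_le f g j |x|
  exact (integrable_inv_one_add_sq.const_mul K).mono'
    (by fun_prop : Continuous _).aestronglyMeasurable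
    (Filter.Eventually.of_forall fun t => hK x y t le_rfl)

theorem hasDerivAt_integrand_x (x y t : ℝ) :
    HasDerivAt (integrand f g · y t)
      ((integrand (∂ f) g x y t + integrand f (∂ g) x y t) / 2) x := by
  have hf := f.hasDerivAt_comp (((hasDerivAt_id x).div_const 2).add_const (t / 2))
  have hg := g.hasDerivAt_conj_comp (((hasDerivAt_id x).div_const 2).sub_const (t / 2))
  refine ((hf.const_mul (cexp (-(I * ((y / 2 : ℝ) : ℂ) * t)))).mul hg).congr_deriv ?_
  simp only [integrand, id, real_smul]
  push_cast
  ring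

theorem hasDerivAt_integrand_y (x y t : ℝ) :
    HasDerivAt (integrand f g x · t) (-(I * t / 2) * integrand f g x y t) y := by
  have he := ((((hasDerivAt_id y).div_const 2).ofReal_comp.const_mul I).mul_const (t : ℂ)).neg.cexp
  refine ((he.mul_const (f (x / 2 + t / 2))).mul_const (conj (g (x / 2 - t / 2)))).congr_deriv ?_
  simp only [integrand, id, Pi.neg_apply]
  push_cast
  ring

theorem hasDerivAt_integrand_t (x y t : ℝ) :
    HasDerivAt (integrand f g x y)
      (-(I * y / 2) * integrand f g x y t
        + (integrand (∂ f) g x y t - integrand f (∂ g) x y t) / 2) t := by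
  have he := (((hasDerivAt_id t).ofReal_comp).const_mul (I * ((y / 2 : ℝ) : ℂ))).neg.cexp
  have hf := f.hasDerivAt_comp (((hasDerivAt_id t).div_const 2).const_add (x / 2))
  have hg := g.hasDerivAt_conj_comp (((hasDerivAt_id t).div_const 2).const_sub (x / 2))
  refine ((he.mul hf).mul hg).congr_deriv ?_
  simp only [integrand, id, real_smul, Pi.neg_apply, Pi.mul_apply]
  push_cast
  ring

theorem hasDerivAt_moment_x (j : ℕ) (x y : ℝ) :
    HasDerivAt (moment f g j · y)
      ((moment (∂ f) g j x y + moment f (∂ g) j x y) / 2) x := by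
  obtain ⟨K₁, hK₁⟩ := exists_norm_pow_mul_integrand_le (∂ f) g j (|x| + 1)
  obtain ⟨K₂, hK₂⟩ := exists_norm_pow_mul_integrand_le f (∂ g) j (|x| + 1)
  have h := hasDerivAt_integral_of_norm_le_inv_one_add_sq (K := (K₁ + K₂) / 2)
    (F := fun x t => (t : ℂ) ^ j * integrand f g x y t)
    (F' := fun x t => ((t : ℂ) ^ j * integrand (∂ f) g x y t
      + (t : ℂ) ^ j * integrand f (∂ g) x y t) / 2)
    (fun x => by fun_prop)
    (by fun_prop)
    (integrable_pow_mul_integrand f g j x y)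
    (fun x' hx' t => by
      have hx : |x'| ≤ |x| + 1 := by
        have := abs_sub_abs_le_abs_sub x' x
        rw [mem_ball, Real.dist_eq] at hx'
        linarith
      calc _ ≤ (‖(t : ℂ) ^ j * integrand (∂ f) g x' y t‖
            + ‖(t : ℂ) ^ j * integrand f (∂ g) x' y t‖) / 2 := by
            rw [norm_div, RCLike.norm_ofNat]
            gcongr
            exact norm_add_le _ _
        _ ≤ (K₁ * (1 + t ^ 2)⁻¹ + K₂ * (1 + t ^ 2)⁻¹) / 2 :=
            by gcongr; exacts [hK₁ x' y t hx, hK₂ x' y t hx]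
        _ = _ := by ring)
    (fun x' _ t => ((hasDerivAt_integrand_x f g x' y t).const_mul _).congr_deriv (by ring))
  rwa [integral_div, integral_add (integrable_pow_mul_integrand _ _ j x y)
    (integrable_pow_mul_integrand _ _ j x y)] at h

theorem hasDerivAt_moment_y (j : ℕ) (x y : ℝ) :
    HasDerivAt (moment f g j x ·) (-(I / 2) * moment f g (j + 1) x y) y := by
  obtain ⟨K, hK⟩ := exists_norm_pow_mul_integrand_le f g (j + 1) |x|
  have h := hasDerivAt_integral_of_norm_le_inv_one_add_sq (K := K / 2)
    (F := fun y t => (t : ℂ) ^ j * integrand f g x y t)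
    (F' := fun y t => -(I / 2) * ((t : ℂ) ^ (j + 1) * integrand f g x y t))
    (fun y => by fun_prop)
    (by fun_prop)
    (integrable_pow_mul_integrand f g j x y)
    (fun y' _ t => by
      rw [norm_mul, norm_neg, norm_div, norm_I, RCLike.norm_ofNat]
      linarith [hK x y' t le_rfl])
    (fun y' _ t => ((hasDerivAt_integrand_y f g x y' t).const_mul _).congr_deriv (by ring))
  rwa [integral_const_mul] at h

theorem integrable_integrand (x y : ℝ) : Integrable (integrand f g x y) := by
  simpa using integrable_pow_mul_integrand f g 0 x y

theorem moment_zero (x y : ℝ) : moment f g 0 x y = ∫ t, integrand f g x y t := by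
  simp [moment]

theorem I_mul_moment_zero (x y : ℝ) :
    I * y / 2 * moment f g 0 x y
      = (moment (∂ f) g 0 x y - moment f (∂ g) 0 x y) / 2 := by
  have hi := integrable_integrand f g x y
  have hi₁ := integrable_integrand (∂ f) g x y
  have hi₂ := integrable_integrand f (∂ g) x y
  have hd : Integrable fun t =>
      (integrand (∂ f) g x y t - integrand f (∂ g) x y t) / 2 :=
    (hi₁.sub hi₂).div_const 2
  have h := integral_eq_zero_of_hasDerivAt_of_integrable (hasDerivAt_integrand_t f g x y)
    ((hi.const_mul _).add hd) hi
  rw [integral_add (hi.const_mul _) hd, integral_const_mul,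
    integral_div, integral_sub hi₁ hi₂] at h
  simp only [moment_zero]
  linear_combination -h

theorem crossWigner1_half (x y : ℝ) :
    crossWigner1 f g (x / 2) (y / 2) = ((2 * π)⁻¹ : ℝ) * moment f g 0 x y := by
  rw [moment_zero]
  rfl

theorem harmOsc_apply (u : ℝ) :
    harmOsc f u = -∂ (∂ f) u + (u : ℂ) ^ 2 * f u := by
  have h : deriv f = derivCLM ℝ ℂ f := funext fun u => (derivCLM_apply ℝ f u).symm
  rw [harmOsc, h, derivCLM_apply]

theorem crossWigner1_harmOsc_half (x y : ℝ) :
    crossWigner1 (harmOsc f) g (x / 2) (y / 2) = ((2 * π)⁻¹ : ℝ) *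
      ((x : ℂ) ^ 2 / 4 * moment f g 0 x y + x / 2 * moment f g 1 x y + 1 / 4 * moment f g 2 x y
        - moment (∂ (∂ f)) g 0 x y) := by
  have hi (j : ℕ) := integrable_pow_mul_integrand f g j x y
  have hi₂ := integrable_pow_mul_integrand (∂ (∂ f)) g 0 x y
  have h (t : ℝ) : cexp (-(I * ((y / 2 : ℝ) : ℂ) * t)) * harmOsc f (x / 2 + t / 2)
      * conj (g (x / 2 - t / 2)) = (x : ℂ) ^ 2 / 4 * ((t : ℂ) ^ 0 * integrand f g x y t)
        + x / 2 * ((t : ℂ) ^ 1 * integrand f g x y t) + 1 / 4 * ((t : ℂ) ^ 2 * integrand f g x y t)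
        - (t : ℂ) ^ 0 * integrand (∂ (∂ f)) g x y t := by
    simp only [integrand, harmOsc_apply]
    push_cast
    ring
  simp only [crossWigner1, h]
  rw [integral_sub, integral_add, integral_add, integral_const_mul, integral_const_mul,
    integral_const_mul]
  · rfl
  all_goals repeat first | exact hi₂ | exact (hi _).const_mul _ | apply Integrable.add

theorem landauOp_const_mul_moment (c : ℂ) (x y : ℝ) :
    landauOp (fun a b => c * moment f g 0 a b) x y = c *
      (-(moment (∂ (∂ f)) g 0 x y + 2 * moment (∂ f) (∂ g) 0 x y + moment f (∂ (∂ g)) 0 x y) / 4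
        + moment f g 2 x y / 4 + x / 2 * moment f g 1 x y
        - I * y / 2 * (moment (∂ f) g 0 x y + moment f (∂ g) 0 x y)
        + (x ^ 2 + y ^ 2) / 4 * moment f g 0 x y) := by
  have hx : pdx (fun a b => c * moment f g 0 a b)
      = fun a b => c * ((moment (∂ f) g 0 a b + moment f (∂ g) 0 a b) / 2) :=
    pdx_eq_of_hasDerivAt fun a b => (hasDerivAt_moment_x f g 0 a b).const_mul c
  have hy : pdy (fun a b => c * moment f g 0 a b) = fun a b => c * (-(I / 2) * moment f g 1 a b) :=
    pdy_eq_of_hasDerivAt fun a b => (hasDerivAt_moment_y f g 0 a b).const_mul c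
  have hxx : pdx (fun a b => c * ((moment (∂ f) g 0 a b + moment f (∂ g) 0 a b) / 2))
      = fun a b => c * ((moment (∂ (∂ f)) g 0 a b + 2 * moment (∂ f) (∂ g) 0 a b
        + moment f (∂ (∂ g)) 0 a b) / 4) :=
    pdx_eq_of_hasDerivAt fun a b => ((((hasDerivAt_moment_x (∂ f) g 0 a b).add
      (hasDerivAt_moment_x f (∂ g) 0 a b)).div_const 2).const_mul c).congr_deriv (by ring)
  have hyy : pdy (fun a b => c * (-(I / 2) * moment f g 1 a b))
      = fun a b => c * (-(moment f g 2 a b) / 4) :=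
    pdy_eq_of_hasDerivAt fun a b =>
      (((hasDerivAt_moment_y f g 1 a b).const_mul _).const_mul c).congr_deriv
        (by linear_combination (c * moment f g 2 a b / 4) * I_sq)
  rw [landauOp, hx, hy, hxx, hyy]
  push_cast
  linear_combination -c * x / 2 * moment f g 1 x y * I_sq

end CrossWigner

open CrossWigner

theorem stmt14 (φ θ : SchwartzMap ℝ ℂ) (x y : ℝ) :
    landauOp (fun a b => crossWigner1 φ θ (a / 2) (b / 2)) x y
      = crossWigner1 (harmOsc φ) θ (x / 2) (y / 2) := by
  simp only [crossWigner1_half, landauOp_const_mul_moment, crossWigner1_harmOsc_half]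
  set c : ℂ := (((2 * π)⁻¹ : ℝ) : ℂ)
  have e := I_mul_moment_zero φ θ x y
  have e₁ := I_mul_moment_zero (∂ φ) θ x y
  have e₂ := I_mul_moment_zero φ (∂ θ) x y
  linear_combination c * (-(3 / 2) * e₁ - 1 / 2 * e₂ - I * y / 2 * e
    + (y : ℂ) ^ 2 / 4 * moment φ θ 0 x y * I_sq)
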